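/- If ψ(k) ∈ ℂ^{2d} is any eigenvector of Û_G(k) with eigenvalue 1, where k is such that all 1+e^{±ik_j} are nonzero, then its components satisfy ψ^{2j-1}(k)(1+e^{-ik_j}) = ψ^1(k)(1+e^{-ik_1}) and ψ^{2j}(k)(1+e^{ik_j}) = ψ^1(k)(1+e^{-ik_1}) for all j = 1,...,d. -/
import Mathlib


open Complex

/-- If `ψ` is an eigenvector of `Û_G(k)` with eigenvalue `1`, where all
`1 + e^{± i k_j}` are nonzero, then
`ψ^{2j-1} (1+e^{-i k_j}) = ψ^1 (1+e^{-i k_1})` and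
`ψ^{2j} (1+e^{i k_j}) = ψ^1 (1+e^{-i k_1})` for all `j = 1, …, d`. -/
theorem groverWalk_fourier_eigenvector_components (d : ℕ) (hd : 1 ≤ d) (k : Fin d → ℝ)
    (hk : ∀ j : Fin d, Complex.exp (Complex.I * (k j : ℂ)) ≠ -1)
    (G : Matrix (Fin (2 * d)) (Fin (2 * d)) ℂ)
    (hG : ∀ i j, G i j = 1 / (d : ℂ) - (if i = j then 1 else 0))
    (S : Matrix (Fin (2 * d)) (Fin (2 * d)) ℂ)
    (hS : S = Matrix.diagonal (fun i =>
      if i.val % 2 = 0 then Complex.exp (Complex.I * (k ⟨i.val / 2, by omega⟩ : ℂ))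
      else Complex.exp (-(Complex.I * (k ⟨i.val / 2, by omega⟩ : ℂ)))))
    (ψ : Fin (2 * d) → ℂ)
    (hψ : (S * G).mulVec ψ = ψ) :
    ∀ j : Fin d,
      ψ ⟨2 * j.val, by omega⟩ * (1 + Complex.exp (-(Complex.I * (k j : ℂ)))) =
        ψ ⟨0, by omega⟩ * (1 + Complex.exp (-(Complex.I * (k ⟨0, hd⟩ : ℂ)))) ∧
      ψ ⟨2 * j.val + 1, by omega⟩ * (1 + Complex.exp (Complex.I * (k j : ℂ))) =
        ψ ⟨0, by omega⟩ * (1 + Complex.exp (-(Complex.I * (k ⟨0, hd⟩ : ℂ)))) := by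
  -- θ i : the phase of row i
  set θ : Fin (2 * d) → ℂ := fun i =>
    if i.val % 2 = 0 then Complex.I * (k ⟨i.val / 2, by omega⟩ : ℂ)
    else -(Complex.I * (k ⟨i.val / 2, by omega⟩ : ℂ)) with hθ
  set c : ℂ := (∑ l, ψ l) / d with hc
  have key : ∀ i : Fin (2 * d), ψ i * (1 + Complex.exp (-(θ i))) = c := by
    intro i
    have h := congrFun hψ i
    have hSi : ∀ l, S i l = if i = l then Complex.exp (θ i) else 0 := by
      intro l
      rw [hS]
      simp only [Matrix.diagonal_apply, hθ]
      split_ifs with h1 h2 h2 <;> simp_all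
    have hrow : ∀ l, (S * G) i l = Complex.exp (θ i) * G i l := by
      intro l
      rw [Matrix.mul_apply]
      rw [Finset.sum_eq_single i]
      · rw [hSi i]; simp
      · intro b _ hb; rw [hSi b]; simp [Ne.symm hb]
      · simp
    have hsum : (S * G).mulVec ψ i = Complex.exp (θ i) * (c - ψ i) := by
      simp only [Matrix.mulVec, dotProduct]
      symm
      calc Complex.exp (θ i) * (c - ψ i)
          = ∑ l, Complex.exp (θ i) * ((1 / (d : ℂ) - if i = l then 1 else 0) * ψ l) := by
            rw [← Finset.mul_sum]
            congr 1
            rw [hc]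
            have : ∑ l, (1 / (d : ℂ) - if i = l then 1 else 0) * ψ l
                = (∑ l, ψ l) / d - ψ i := by
              simp only [sub_mul, Finset.sum_sub_distrib]
              congr 1
              · rw [← Finset.mul_sum]
                ring
              · simp [Finset.sum_ite_eq, ite_mul]
            rw [this]
        _ = ∑ l, (S * G) i l * ψ l := by
            apply Finset.sum_congr rfl
            intro l _
            rw [hrow l, hG i l]
            ring
    have h2 : Complex.exp (θ i) * (c - ψ i) = ψ i := by rw [← hsum]; exact h
    have := congrArg (fun z => Complex.exp (-(θ i)) * z) h2
    simp only [← mul_assoc, ← Complex.exp_add, neg_add_cancel, Complex.exp_zero,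
      one_mul] at this
    linear_combination -this
  intro j
  have hbase : ψ ⟨0, by omega⟩ * (1 + Complex.exp (-(Complex.I * (k ⟨0, hd⟩ : ℂ)))) = c := by
    have hθ0 : θ ⟨0, by omega⟩ = Complex.I * (k ⟨0, hd⟩ : ℂ) := by
      simp only [hθ]
      norm_num
    have := key ⟨0, by omega⟩
    rwa [hθ0] at this
  constructor
  · have := key ⟨2 * j.val, by omega⟩
    have hmod : (2 * j.val) % 2 = 0 := by omega
    have hdiv : (2 * j.val) / 2 = j.val := by omega
    rw [hθ] at this
    simp only [hmod, if_pos] at this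
    rw [show (⟨(2 * j.val) / 2, by omega⟩ : Fin d) = j from Fin.ext hdiv] at this
    rw [this, hbase]
  · have := key ⟨2 * j.val + 1, by omega⟩
    have hmod : ¬((2 * j.val + 1) % 2 = 0) := by omega
    have hdiv : (2 * j.val + 1) / 2 = j.val := by omega
    rw [hθ] at this
    simp only [hmod, if_neg, if_false, neg_neg] at this
    rw [show (⟨(2 * j.val + 1) / 2, by omega⟩ : Fin d) = j from Fin.ext hdiv] at this
    rw [this, hbase]
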